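/- Let f : ℝ → ℝ be L-Lipschitz and square-integrable, and define W_κ(f)(x) = ∑_{j∈ℤ} ⟨f, φ_{κj}⟩ φ_{κj}(x) with φ_{κj}(x) = 2^{κ/2} φ(2^κ x − j) and φ the hat function. Then |W_κ(f)(x) − f(x)| ≤ L · 2^{−κ+1} for all x ∈ ℝ. -/

import Mathlib

open MeasureTheory

/-- The hat function: φ(x) = x+1 for -1 ≤ x ≤ 0, φ(x) = 1-x for 0 < x ≤ 1, 0 otherwise. -/
noncomputable def hatFn (x : ℝ) : ℝ :=
  if -1 ≤ x ∧ x ≤ 0 then x + 1 else if 0 < x ∧ x ≤ 1 then 1 - x else 0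

/-- The rescaled hat wavelet φ_{κj}(x) = 2^{κ/2} φ(2^κ x − j). -/
noncomputable def phiK (κ j : ℤ) (x : ℝ) : ℝ :=
  (2:ℝ) ^ ((κ:ℝ) / 2) * hatFn ((2:ℝ) ^ κ * x - j)

lemma hatFn_eq (x : ℝ) : hatFn x = max (1 - |x|) 0 := by
  unfold hatFn
  split_ifs with hA hB
  · rw [abs_of_nonpos hA.2, max_eq_left (by linarith [hA.1])]; ring
  · rw [abs_of_pos hB.1, max_eq_left (by linarith [hB.2])]
  · push_neg at hA hB
    rcases le_or_gt x 0 with h | h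
    · have hx1 : x < -1 := by by_contra hc; push_neg at hc; linarith [hA hc]
      rw [abs_of_nonpos h, max_eq_right (by linarith)]
    · have hx1 : 1 < x := hB h
      rw [abs_of_pos h, max_eq_right (by linarith)]

lemma hatFn_nonneg (x : ℝ) : 0 ≤ hatFn x := by rw [hatFn_eq]; exact le_max_right _ _

lemma hatFn_zero {x : ℝ} (h : 1 ≤ |x|) : hatFn x = 0 := by
  rw [hatFn_eq, max_eq_right (by linarith)]

lemma abs_lt_one_of_hatFn_ne {x : ℝ} (h : hatFn x ≠ 0) : |x| < 1 := by
  by_contra hc; exact h (hatFn_zero (by linarith [not_lt.mp hc]))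

lemma hatFn_continuous : Continuous hatFn := by
  have : hatFn = fun x => max (1 - |x|) 0 := funext hatFn_eq
  rw [this]; fun_prop

lemma hatFn_hcs : HasCompactSupport hatFn := by
  apply HasCompactSupport.intro (isCompact_Icc (a := (-1:ℝ)) (b := 1))
  intro x hx
  simp only [Set.mem_Icc, not_and_or, not_le] at hx
  exact hatFn_zero (by rcases hx with h | h <;> [rw [abs_of_neg (by linarith)]; rw [abs_of_pos (by linarith)]] <;> linarith)

lemma hatFn_partition {u : ℝ} : hatFn (u - ⌊u⌋) + hatFn (u - (⌊u⌋ + 1)) = 1 := by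
  have h1 : (0:ℝ) ≤ u - ⌊u⌋ := by linarith [Int.floor_le u]
  have h2 : u - ⌊u⌋ < 1 := by linarith [Int.lt_floor_add_one u]
  rw [hatFn_eq, hatFn_eq, abs_of_nonneg h1, abs_of_nonpos (by push_cast; linarith),
    max_eq_left (by linarith), max_eq_left (by push_cast; linarith)]
  push_cast; ring

lemma integral_hatFn : ∫ t : ℝ, hatFn t = 1 := by
  have hs : Function.support hatFn ⊆ Set.Icc (-1:ℝ) 1 := by
    intro x hx
    have h := abs_lt_one_of_hatFn_ne hx
    rw [abs_lt] at h
    exact ⟨h.1.le, h.2.le⟩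
  rw [← Set.indicator_eq_self.2 hs, integral_indicator measurableSet_Icc,
    MeasureTheory.integral_Icc_eq_integral_Ioc, ← intervalIntegral.integral_of_le (by norm_num)]
  have hi : ∀ a b : ℝ, IntervalIntegrable hatFn volume a b :=
    fun a b => hatFn_continuous.intervalIntegrable a b
  rw [← intervalIntegral.integral_add_adjacent_intervals (hi (-1) 0) (hi 0 1)]
  have e1 : ∫ x in (-1:ℝ)..0, hatFn x = ∫ x in (-1:ℝ)..0, (x + 1) := by
    apply intervalIntegral.integral_congr
    intro x hx
    rw [Set.uIcc_of_le (by norm_num)] at hx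
    unfold hatFn
    rw [if_pos (show -1 ≤ x ∧ x ≤ 0 from ⟨hx.1, hx.2⟩)]
  have e2 : ∫ x in (0:ℝ)..1, hatFn x = ∫ x in (0:ℝ)..1, (1 - x) := by
    apply intervalIntegral.integral_congr
    intro x hx
    rw [Set.uIcc_of_le (by norm_num)] at hx
    rcases eq_or_lt_of_le hx.1 with h | h
    · unfold hatFn
      rw [if_pos (show -1 ≤ x ∧ x ≤ 0 from ⟨by linarith, le_of_eq h.symm⟩)]
      rw [← h]; norm_num
    · unfold hatFn
      rw [if_neg (by push_neg; intro _; linarith), if_pos ⟨h, hx.2⟩]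
  have I1 : ∫ x in (-1:ℝ)..0, (x + 1) = 1/2 := by
    have hd : ∀ y ∈ Set.uIcc (-1:ℝ) 0, HasDerivAt (fun x : ℝ => x^2/2 + x) (y + 1) y := by
      intro y _
      have h1 := ((hasDerivAt_pow 2 y).div_const 2).add (hasDerivAt_id y)
      have h1' : HasDerivAt (fun x : ℝ => x^2/2 + x) (↑2 * y ^ (2 - 1) / 2 + 1) y := h1
      convert h1' using 1
      simp
    rw [intervalIntegral.integral_eq_sub_of_hasDerivAt hd
      ((continuous_id.add continuous_const).intervalIntegrable _ _)]
    norm_num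
  have I2 : ∫ x in (0:ℝ)..1, (1 - x) = 1/2 := by
    have hd : ∀ y ∈ Set.uIcc (0:ℝ) 1, HasDerivAt (fun x : ℝ => x - x^2/2) (1 - y) y := by
      intro y _
      have h1 := (hasDerivAt_id y).sub ((hasDerivAt_pow 2 y).div_const 2)
      have h1' : HasDerivAt (fun x : ℝ => x - x^2/2) (1 - ↑2 * y ^ (2 - 1) / 2) y := h1
      convert h1' using 1
      simp
    rw [intervalIntegral.integral_eq_sub_of_hasDerivAt hd
      ((continuous_const.sub continuous_id).intervalIntegrable _ _)]
    norm_num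
  rw [e1, e2, I1, I2]; norm_num

lemma phiK_nonneg (κ j : ℤ) (x : ℝ) : 0 ≤ phiK κ j x :=
  mul_nonneg (Real.rpow_nonneg (by norm_num) _) (hatFn_nonneg _)

lemma phiK_continuous (κ j : ℤ) : Continuous (phiK κ j) :=
  continuous_const.mul (hatFn_continuous.comp
    ((continuous_const.mul continuous_id).sub continuous_const))

lemma phiK_hcs (κ j : ℤ) : HasCompactSupport (phiK κ j) := by
  have hApos : (0:ℝ) < (2:ℝ) ^ κ := zpow_pos (by norm_num) κ
  apply HasCompactSupport.intro
    (isCompact_Icc (a := ((j:ℝ) - 1) / (2:ℝ)^κ) (b := ((j:ℝ) + 1) / (2:ℝ)^κ))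
  intro x hx
  simp only [Set.mem_Icc, not_and_or, not_le] at hx
  unfold phiK
  rw [hatFn_zero, mul_zero]
  rcases hx with h | h
  · rw [lt_div_iff₀ hApos] at h
    rw [abs_of_nonpos (by nlinarith)]
    nlinarith
  · rw [div_lt_iff₀ hApos] at h
    rw [abs_of_nonneg (by nlinarith)]
    nlinarith

lemma phiK_memℒp (κ j : ℤ) : MemLp (phiK κ j) 2 volume :=
  (phiK_continuous κ j).memLp_of_hasCompactSupport (phiK_hcs κ j)

lemma phiK_integrable (κ j : ℤ) : Integrable (phiK κ j) volume :=
  (phiK_continuous κ j).integrable_of_hasCompactSupport (phiK_hcs κ j)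

lemma integral_phiK (κ j : ℤ) :
    ∫ t : ℝ, phiK κ j t = (2:ℝ) ^ ((κ:ℝ) / 2) * ((2:ℝ) ^ κ)⁻¹ := by
  have hApos : (0:ℝ) < (2:ℝ) ^ κ := zpow_pos (by norm_num) κ
  unfold phiK
  rw [MeasureTheory.integral_const_mul]
  have h1 : (∫ t : ℝ, hatFn ((2:ℝ)^κ * t - j)) = |((2:ℝ)^κ)⁻¹| • ∫ s : ℝ, hatFn (s - j) :=
    MeasureTheory.Measure.integral_comp_mul_left (fun s => hatFn (s - j)) ((2:ℝ)^κ)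
  rw [h1, integral_sub_right_eq_self hatFn (j:ℝ), integral_hatFn,
    abs_of_pos (inv_pos.2 hApos)]
  simp

/-- For L-Lipschitz square-integrable f, the wavelet reconstruction
W_κ(f)(x) = ∑_j ⟨f, φ_{κj}⟩ φ_{κj}(x) satisfies |W_κ(f)(x) − f(x)| ≤ L · 2^{−κ+1}. -/
theorem wavelet_lipschitz_approx (f : ℝ → ℝ) (L : ℝ) (κ : ℤ)
    (hLip : ∀ s t : ℝ, |f s - f t| ≤ L * |s - t|)
    (hL2 : MemLp f 2 volume) :
    ∀ x : ℝ,
      |(∑' j : ℤ, (∫ t : ℝ, f t * phiK κ j t) * phiK κ j x) - f x| ≤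
        L * (2:ℝ) ^ (-(κ:ℝ) + 1) := by
  intro x
  have hL0 : 0 ≤ L := by
    calc (0:ℝ) ≤ |f 0 - f 1| := abs_nonneg _
    _ ≤ L * |0 - 1| := hLip 0 1
    _ = L := by norm_num
  set A : ℝ := (2:ℝ) ^ κ with hA
  have hApos : 0 < A := zpow_pos (by norm_num) κ
  set B : ℝ := (2:ℝ) ^ ((κ:ℝ) / 2) with hB
  have hBpos : 0 < B := Real.rpow_pos_of_pos (by norm_num) _
  have hBB : B * B = A := by
    rw [hB, hA, ← Real.rpow_add (by norm_num), ← Real.rpow_intCast]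
    norm_num
  have hphiK : ∀ (j : ℤ) (t : ℝ), phiK κ j t = B * hatFn (A * t - j) := by
    intro j t; unfold phiK; rw [hA, hB]
  have hIphi : ∀ j : ℤ, ∫ t : ℝ, phiK κ j t = B * A⁻¹ := fun j => by
    rw [integral_phiK κ j, hA, hB]
  -- integrability
  have hint1 : ∀ j : ℤ, Integrable (fun t => f t * phiK κ j t) volume := by
    intro j
    have hs : MemLp ((phiK κ j) • f) 1 volume :=
      hL2.smul (phiK_memℒp κ j)
    have h2 : Integrable (fun t => phiK κ j t * f t) volume := by
      exact memLp_one_iff_integrable.mp hs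
    exact h2.congr (ae_of_all _ fun t => mul_comm _ _)
  have hint2 : ∀ j : ℤ, Integrable (fun t => (f t - f x) * phiK κ j t) volume := fun j =>
    ((hint1 j).sub ((phiK_integrable κ j).const_mul (f x))).congr
      (ae_of_all _ fun t => (sub_mul _ _ _).symm)
  set j0 : ℤ := ⌊A * x⌋ with hj0
  -- tsum reduction
  have hzero : ∀ j : ℤ, j ∉ ({j0, j0 + 1} : Finset ℤ) →
      (∫ t : ℝ, f t * phiK κ j t) * phiK κ j x = 0 := by
    intro j hj
    simp only [Finset.mem_insert, Finset.mem_singleton, not_or] at hj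
    have hf1 : (j0:ℝ) ≤ A * x := Int.floor_le (A * x)
    have hf2 : A * x < j0 + 1 := Int.lt_floor_add_one (A * x)
    have h1 : hatFn (A * x - j) = 0 := by
      apply hatFn_zero
      have hcase : j ≤ j0 - 1 ∨ j0 + 2 ≤ j := by omega
      rcases hcase with h | h
      · have hjr : (j:ℝ) ≤ (j0:ℝ) - 1 := by exact_mod_cast h
        exact le_abs.2 (Or.inl (by linarith))
      · have hjr : (j0:ℝ) + 2 ≤ (j:ℝ) := by exact_mod_cast h
        exact le_abs.2 (Or.inr (by linarith))
    rw [hphiK j x, h1, mul_zero, mul_zero]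
  rw [tsum_eq_sum hzero, Finset.sum_pair (by omega : j0 ≠ j0 + 1)]
  -- coefficient decomposition
  have hcoef : ∀ j : ℤ, (∫ t : ℝ, f t * phiK κ j t) =
      (∫ t : ℝ, (f t - f x) * phiK κ j t) + f x * (B * A⁻¹) := by
    intro j
    have hfun : (fun t => f t * phiK κ j t) =
        fun t => (f t - f x) * phiK κ j t + f x * phiK κ j t := by
      funext t; ring
    rw [hfun, integral_add (hint2 j) ((phiK_integrable κ j).const_mul (f x)),
      MeasureTheory.integral_const_mul, hIphi j]
  set e : ℤ → ℝ := fun j => ∫ t : ℝ, (f t - f x) * phiK κ j t with he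
  -- bound on e j when phiK κ j x ≠ 0
  have hbound : ∀ j : ℤ, phiK κ j x ≠ 0 →
      |e j| ≤ L * (2 * A⁻¹) * (B * A⁻¹) := by
    intro j hjx
    have hjx' : |A * x - j| < 1 := by
      apply abs_lt_one_of_hatFn_ne
      intro hc; exact hjx (by rw [hphiK j x, hc, mul_zero])
    have hpt : ∀ t : ℝ, ‖(f t - f x) * phiK κ j t‖ ≤ L * (2 * A⁻¹) * phiK κ j t := by
      intro t
      rw [Real.norm_eq_abs, abs_mul, abs_of_nonneg (phiK_nonneg κ j t)]
      by_cases ht : phiK κ j t = 0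
      · rw [ht, mul_zero, mul_zero]
      · have ht' : |A * t - j| < 1 := by
          apply abs_lt_one_of_hatFn_ne
          intro hc; exact ht (by rw [hphiK j t, hc, mul_zero])
        have htx : |t - x| ≤ 2 * A⁻¹ := by
          have h3 : |A * t - A * x| ≤ 2 := by
            calc |A * t - A * x| ≤ |A * t - j| + |(j:ℝ) - A * x| :=
              abs_sub_le (A * t) (j:ℝ) (A * x)
            _ ≤ 2 := by rw [abs_sub_comm (j:ℝ) (A * x)]; linarith
          rw [show t - x = (A * t - A * x) / A by rw [eq_div_iff hApos.ne']; ring,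
            abs_div, abs_of_pos hApos, div_le_iff₀ hApos]
          calc |A * t - A * x| ≤ 2 := h3
          _ = 2 * A⁻¹ * A := by field_simp
        have h4 : |f t - f x| ≤ L * (2 * A⁻¹) := by
          calc |f t - f x| ≤ L * |t - x| := hLip t x
          _ ≤ L * (2 * A⁻¹) := by
            apply mul_le_mul_of_nonneg_left htx hL0
        exact mul_le_mul_of_nonneg_right h4 (phiK_nonneg κ j t)
    calc |e j| ≤ ∫ t : ℝ, ‖(f t - f x) * phiK κ j t‖ := by
          rw [he, ← Real.norm_eq_abs]
          exact norm_integral_le_integral_norm _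
    _ ≤ ∫ t : ℝ, L * (2 * A⁻¹) * phiK κ j t :=
          integral_mono (hint2 j).norm
            ((phiK_integrable κ j).const_mul _) hpt
    _ = L * (2 * A⁻¹) * (B * A⁻¹) := by
          rw [MeasureTheory.integral_const_mul, hIphi j]
  -- partition of unity at x
  have hpartx : phiK κ j0 x + phiK κ (j0 + 1) x = B := by
    rw [hphiK j0 x, hphiK (j0 + 1) x, ← mul_add]
    have hp := hatFn_partition (u := A * x)
    rw [← hj0] at hp
    have : hatFn (A * x - ↑j0) + hatFn (A * x - ↑(j0 + 1)) = 1 := by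
      push_cast
      push_cast at hp
      convert hp using 3 <;> ring
    rw [this, mul_one]
  have hBA : B * A⁻¹ * B = 1 := by
    rw [← hBB]; field_simp
  -- assemble
  rw [hcoef j0, hcoef (j0 + 1)]
  have heq : (e j0 + f x * (B * A⁻¹)) * phiK κ j0 x
      + (e (j0 + 1) + f x * (B * A⁻¹)) * phiK κ (j0 + 1) x - f x
      = e j0 * phiK κ j0 x + e (j0 + 1) * phiK κ (j0 + 1) x := by
    linear_combination (f x * (B * A⁻¹)) * hpartx + f x * hBA
  rw [heq]
  have hterm : ∀ j : ℤ, |e j| * phiK κ j x ≤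
      L * (2 * A⁻¹) * (B * A⁻¹) * phiK κ j x := by
    intro j
    by_cases h : phiK κ j x = 0
    · rw [h, mul_zero, mul_zero]
    · exact mul_le_mul_of_nonneg_right (hbound j h) (phiK_nonneg κ j x)
  have hfinal : (2:ℝ) ^ (-(κ:ℝ) + 1) = 2 * A⁻¹ := by
    rw [Real.rpow_add (by norm_num), Real.rpow_one, Real.rpow_neg (by norm_num),
      Real.rpow_intCast, ← hA]
    ring
  rw [hfinal]
  calc |e j0 * phiK κ j0 x + e (j0 + 1) * phiK κ (j0 + 1) x|
      ≤ |e j0 * phiK κ j0 x| + |e (j0 + 1) * phiK κ (j0 + 1) x| := abs_add_le _ _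
    _ = |e j0| * phiK κ j0 x + |e (j0 + 1)| * phiK κ (j0 + 1) x := by
        rw [abs_mul, abs_mul, abs_of_nonneg (phiK_nonneg κ j0 x),
          abs_of_nonneg (phiK_nonneg κ (j0 + 1) x)]
    _ ≤ L * (2 * A⁻¹) * (B * A⁻¹) * phiK κ j0 x
        + L * (2 * A⁻¹) * (B * A⁻¹) * phiK κ (j0 + 1) x := by
        linarith [hterm j0, hterm (j0 + 1)]
    _ = L * (2 * A⁻¹) * (B * A⁻¹ * B) := by
        rw [← mul_add, ← hpartx]; ring
    _ = L * (2 * A⁻¹) := by rw [hBA, mul_one]
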